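/- arXiv:1907.06549 — 3 statements merged into one kernel-verified Lean document; each statement's English description precedes it below -/
import Mathlib

section
/- The cyclic group C₅ generated by a 5-cycle acting on 5 points is not a relation group: there is no hypergraph H on a 5-element set with Aut(H) = C₅. -/
open Pointwise

/-! The reflection `x ↦ -x` of `ℤ/5` carries every subset onto one of its rotations (a check over
the 32 subsets). So whenever the rotations preserve a hypergraph, so does the reflection; but the
reflection does not commute with the 5-cycle, hence does not lie in `C₅`. -/

lemma smul_mem_of_forall_exists_smul_eq {G α : Type*} [Group G] [MulAction G α]
    {C : Subgroup G} {H : Set α} (hC : ∀ c ∈ C, ∀ x ∈ H, c • x ∈ H) {σ : G}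
    (hσ : ∀ x : α, ∃ c ∈ C, σ • x = c • x) : ∀ x ∈ H, σ • x ∈ H := by
  intro x hx
  obtain ⟨c, hc, hσx⟩ := hσ x
  exact hσx ▸ hC c hc x hx

lemma exists_finRotate_pow_smul_eq_neg_smul (s : Finset (Fin 5)) :
    ∃ k : Fin 5, Equiv.neg (Fin 5) • s = finRotate 5 ^ (k : ℕ) • s := by
  revert s
  decide

lemma neg_notMem_zpowers_finRotate : Equiv.neg (Fin 5) ∉ Subgroup.zpowers (finRotate 5) := by
  rintro ⟨k, hk⟩
  have hcomm : Commute (Equiv.neg (Fin 5)) (finRotate 5) := hk ▸ (Commute.refl _).zpow_left k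
  exact absurd hcomm.eq (by decide)

/-- the cyclic group `C₅` generated by a 5-cycle on 5 points is not a
relation group: no hypergraph `H` on a 5-element set has `Aut(H) = C₅`. -/
theorem stmt4 :
    ¬ ∃ H : Set (Finset (Fin 5)),
        {g : Equiv.Perm (Fin 5) | ∀ x ∈ H, g • x ∈ H}
          = (Subgroup.zpowers (finRotate 5) : Set (Equiv.Perm (Fin 5))) := by
  rintro ⟨H, hH⟩
  have hC : ∀ c ∈ Subgroup.zpowers (finRotate 5), ∀ x ∈ H, c • x ∈ H := by
    intro c hc
    rwa [← SetLike.mem_coe, ← hH] at hc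
  have hneg : ∀ x ∈ H, Equiv.neg (Fin 5) • x ∈ H := by
    refine smul_mem_of_forall_exists_smul_eq hC fun s => ?_
    obtain ⟨k, hk⟩ := exists_finRotate_pow_smul_eq_neg_smul s
    exact ⟨_, Subgroup.npow_mem_zpowers _ _, hk⟩
  have hneg_mem : Equiv.neg (Fin 5) ∈ (Subgroup.zpowers (finRotate 5) : Set _) := hH ▸ hneg
  exact neg_notMem_zpowers_finRotate hneg_mem
end

section
/- If G ≤ Sym(Ω) is a relation group defined by a relation R (i.e., G = Aut(R)) and y is a regular set for G with |y| ∉ ar(R), then for every subgroup K ≤ G, the group Aut(R ∪ y^K) equals K; i.e., every subgroup of G is a relation group. -/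
/-!
An element `g` of `Aut(R ∪ y^K)` preserves cardinalities, and since no edge of `R` has size `|y|`
it must preserve `R` and `y^K` separately. Hence `g ∈ Aut(R) = G` and `g • y = k • y` for some
`k ∈ K`; then `k⁻¹ * g ∈ G` fixes `y`, so regularity of `y` gives `g = k ∈ K`.
-/

open Pointwise

theorem Set.MapsTo.left_right_of_union_self {α β : Type*} {f : α → α} {s t : Set α}
    (φ : α → β) (hφ : ∀ a, φ (f a) = φ a) (hst : ∀ a ∈ s, ∀ b ∈ t, φ a ≠ φ b)
    (h : Set.MapsTo f (s ∪ t) (s ∪ t)) : Set.MapsTo f s s ∧ Set.MapsTo f t t := by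
  refine ⟨fun a ha => (h (Or.inl ha)).resolve_right fun hfa => ?_,
    fun b hb => (h (Or.inr hb)).resolve_left fun hfb => ?_⟩
  · exact hst a ha (f a) hfa (hφ a).symm
  · exact hst (f b) hfb b hb (hφ b)

theorem Subgroup.eq_of_smul_eq_of_stabilizer_trivial {α β : Type*} [Group α] [MulAction α β]
    {G : Subgroup α} {y : β} (hreg : ∀ g ∈ G, g • y = y → g = 1) {g h : α}
    (hg : g ∈ G) (hh : h ∈ G) (hgh : g • y = h • y) : g = h := by
  have hfix : (h⁻¹ * g) • y = y := by rw [mul_smul, hgh, inv_smul_smul]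
  exact inv_mul_eq_one.mp (hreg _ (G.mul_mem (G.inv_mem hh) hg) hfix) |>.symm

section FinsetOrbit

variable {Ω : Type*} [DecidableEq Ω] (K : Subgroup (Equiv.Perm Ω)) (y : Finset Ω)

theorem mapsTo_smul_orbit_of_mem {g : Equiv.Perm Ω} (hg : g ∈ K) :
    Set.MapsTo (g • ·) {z : Finset Ω | ∃ k ∈ K, k • y = z} {z | ∃ k ∈ K, k • y = z} := by
  rintro _ ⟨k, hk, rfl⟩
  exact ⟨g * k, K.mul_mem hg hk, mul_smul g k y⟩

theorem card_eq_of_mem_orbit {z : Finset Ω} (hz : z ∈ {z : Finset Ω | ∃ k ∈ K, k • y = z}) :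
    z.card = y.card := by
  obtain ⟨k, -, rfl⟩ := hz
  exact Finset.card_smul_finset k y

end FinsetOrbit

theorem stmt16_general {Ω : Type*} [DecidableEq Ω]
    (G : Subgroup (Equiv.Perm Ω)) (R : Set (Finset Ω))
    (hG : (G : Set (Equiv.Perm Ω)) = {g : Equiv.Perm Ω | ∀ x ∈ R, g • x ∈ R})
    (y : Finset Ω)
    (hreg : ∀ g ∈ G, g • y = y → g = 1)
    (har : ∀ x ∈ R, x.card ≠ y.card) :
    ∀ K : Subgroup (Equiv.Perm Ω), K ≤ G →
      {g : Equiv.Perm Ω |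
          ∀ x ∈ R ∪ {z : Finset Ω | ∃ k ∈ K, k • y = z},
            g • x ∈ R ∪ {z : Finset Ω | ∃ k ∈ K, k • y = z}}
        = (K : Set (Equiv.Perm Ω)) := by
  intro K hKG
  have mem_G {g : Equiv.Perm Ω} : g ∈ G ↔ Set.MapsTo (g • ·) R R := by
    rw [← SetLike.mem_coe, hG]; rfl
  ext g
  constructor
  · intro hg
    obtain ⟨hgR, hgY⟩ := Set.MapsTo.left_right_of_union_self Finset.card
      (Finset.card_smul_finset g) (fun x hx z hz => card_eq_of_mem_orbit K y hz ▸ har x hx)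
      (fun x hx => hg x hx)
    obtain ⟨k, hk, hky⟩ := hgY ⟨1, K.one_mem, one_smul _ y⟩
    have hgk : g = k :=
      G.eq_of_smul_eq_of_stabilizer_trivial hreg (mem_G.mpr hgR) (hKG hk) hky.symm
    exact hgk ▸ hk
  · intro hgK
    exact (mem_G.mp (hKG hgK)).union_union (mapsTo_smul_orbit_of_mem K y hgK)

/-- Siemons–Volta Lemma 3.1(i): if `G = Aut(R)`, `y` is a regular set
for `G` with `|y| ∉ ar(R)`, then for every subgroup `K ≤ G` we have
`Aut(R ∪ y^K) = K`; i.e. every subgroup of `G` is a relation group. -/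
theorem stmt16 {Ω : Type*} [Fintype Ω] [DecidableEq Ω]
    (G : Subgroup (Equiv.Perm Ω)) (R : Set (Finset Ω))
    (hG : (G : Set (Equiv.Perm Ω)) = {g : Equiv.Perm Ω | ∀ x ∈ R, g • x ∈ R})
    (y : Finset Ω)
    (hreg : ∀ g ∈ G, g • y = y → g = 1)
    (har : ∀ x ∈ R, x.card ≠ y.card) :
    ∀ K : Subgroup (Equiv.Perm Ω), K ≤ G →
      {g : Equiv.Perm Ω |
          ∀ x ∈ R ∪ {z : Finset Ω | ∃ k ∈ K, k • y = z},
            g • x ∈ R ∪ {z : Finset Ω | ∃ k ∈ K, k • y = z}}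
        = (K : Set (Equiv.Perm Ω)) :=
  stmt16_general G R hG y hreg har
end

section
/- Let G ≤ Sym(Ω) with a regular set y, and suppose G is not set-transitive and is maximal in Sym(Ω) with respect to not being set-transitive. Then every subgroup of G is a relation group (the automorphism group of some hypergraph on Ω). -/
/-!
If `x` and `z` have the same size but lie in different `G`-orbits, maximality forces the
setwise stabilizer in `Sym(Ω)` of the orbit `xᴳ` to be `G` itself: a larger stabilizer would be
set-transitive and carry `x` to `z`. Given a regular set `u` with `|u| ≠ |x|`, the hypergraph
`uᴷ ∪ xᴳ` then has automorphism group exactly `K`: an automorphism preserves both parts, hence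
lies in `G`, and maps `u` to some `uᵏ`, hence equals `k` by regularity.

The regular set `y` serves as `u` unless `G` is transitive on the sets of every size other than
`m = |y|`. Then complementation gives `|Ω| = 2m`, and comparing `|G| < C(2m, m)` (from the
regular orbit of `y`) with `|G| ≥ 2 C(2m, m - 1)` (if some `(m - 1)`-set had a nontrivial
stabilizer) shows that every `(m - 1)`-set is regular.
-/

open Pointwise MulAction

section GroupAction

variable {M α : Type*} [Group M] [MulAction M α]

lemma mem_orbit_subgroup_iff {G : Subgroup M} {a b : α} :
    b ∈ orbit G a ↔ ∃ g ∈ G, g • a = b := by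
  simp [mem_orbit_iff, Subgroup.smul_def]

lemma Subgroup.le_stabilizer_orbit (G : Subgroup M) (a : α) : G ≤ stabilizer M (orbit G a) :=
  fun g hg => smul_orbit (⟨g, hg⟩ : G) a

lemma stabilizer_orbit_le_of_maximal {G : Subgroup M} {a b : α} (hb : b ∉ orbit G a)
    (hmax : ∀ G' : Subgroup M, G < G' → ∃ g ∈ G', g • a = b) :
    stabilizer M (orbit G a) ≤ G := by
  by_contra hle
  obtain ⟨g, hg, rfl⟩ := hmax _ (lt_of_le_not_ge (G.le_stabilizer_orbit a) hle)
  rw [← mem_stabilizer_iff.1 hg] at hb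
  exact hb (Set.smul_mem_smul_set (mem_orbit_self a))

lemma inf_stabilizer_orbit_le_of_regular {G K : Subgroup M} (hKG : K ≤ G) {u : α}
    (hu : ∀ g ∈ G, g • u = u → g = 1) : G ⊓ stabilizer M (orbit K u) ≤ K := by
  rintro g ⟨hgG, hg⟩
  have hgu : g • u ∈ orbit K u := by
    rw [← mem_stabilizer_iff.1 hg]
    exact Set.smul_mem_smul_set (mem_orbit_self u)
  obtain ⟨k, hk, hku⟩ := mem_orbit_subgroup_iff.1 hgu
  have hkg : k⁻¹ * g = 1 :=
    hu _ (G.mul_mem (G.inv_mem (hKG hk)) hgG) (by rw [mul_smul, ← hku, inv_smul_smul])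
  rwa [← inv_mul_eq_one.1 hkg]

lemma union_inter_setOf_card_eq {A B : Set (Finset α)} {a b : ℕ}
    (hA : A ⊆ {t | t.card = a}) (hB : B ⊆ {t | t.card = b}) (hab : a ≠ b) :
    (A ∪ B) ∩ {t | t.card = a} = A := by
  ext t
  constructor
  · rintro ⟨htA | htB, ht⟩
    · exact htA
    · exact absurd ((hB htB).symm.trans ht) (Ne.symm hab)
  · exact fun ht => ⟨Or.inl ht, hA ht⟩

lemma card_orbit_mul_card_stabilizer (a : α) :
    (orbit M a).ncard * Nat.card (stabilizer M a) = Nat.card M := by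
  rw [← index_stabilizer, mul_comm, Subgroup.card_mul_index]

variable [DecidableEq α]

lemma orbit_subset_setOf_card_eq (G : Subgroup M) (s : Finset α) :
    orbit G s ⊆ {t | t.card = s.card} := by
  rintro _ ⟨g, rfl⟩
  exact Finset.card_smul_finset (g : M) s

lemma stabilizer_le_stabilizer_inter_setOf_card_eq (H : Set (Finset α)) (k : ℕ) :
    stabilizer M H ≤ stabilizer M (H ∩ {t | t.card = k}) := by
  intro g hg
  exact stabilizer_inf_stabilizer_le_stabilizer_inter
    ⟨hg, mem_stabilizer_set.2 fun t => by simp [Finset.card_smul_finset]⟩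

lemma Finset.smul_finset_compl [Fintype α] (g : M) (s : Finset α) : g • sᶜ = (g • s)ᶜ :=
  Finset.coe_injective (by simp [Finset.coe_smul_finset, Set.smul_set_compl])

lemma compl_notMem_orbit [Fintype α] {G : Subgroup M} {s t : Finset α} (h : t ∉ orbit G s) :
    tᶜ ∉ orbit G sᶜ := by
  simp only [mem_orbit_subgroup_iff, Finset.smul_finset_compl, compl_inj_iff] at h ⊢
  exact h

end GroupAction

lemma Nat.choose_two_mul_self_le_two_mul_choose_pred (m : ℕ) :
    (2 * m).choose m ≤ 2 * (2 * m).choose (m - 1) := by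
  rcases m with _ | k
  · simp
  have h := Nat.choose_succ_right_eq (2 * (k + 1)) k
  have hsub : 2 * (k + 1) - k = k + 2 := by omega
  rw [hsub] at h
  refine Nat.le_of_mul_le_mul_right (c := k + 1) ?_ k.succ_pos
  rw [h, Nat.add_sub_cancel]
  nlinarith

section Permutation

open Equiv

variable {Ω : Type*}

lemma ncard_setOf_card_eq [Fintype Ω] (k : ℕ) :
    {s : Finset Ω | s.card = k}.ncard = (Fintype.card Ω).choose k := by
  rw [Set.ncard_eq_toFinset_card', Set.toFinset_ofPred, Finset.univ_filter_card_eq,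
    Finset.card_powersetCard, Finset.card_univ]

variable [DecidableEq Ω]

/-- `H` is the edge set of a hypergraph on `Ω`; as `H` is finite, a permutation mapping `H` into
itself is an automorphism of it. -/
def IsRelationGroup (K : Subgroup (Perm Ω)) : Prop :=
  ∃ H : Set (Finset Ω), (K : Set (Perm Ω)) = {g | ∀ x ∈ H, g • x ∈ H}

variable [Fintype Ω]

lemma isRelationGroup_of_stabilizer_eq {K : Subgroup (Perm Ω)} (H : Set (Finset Ω))
    (hK : stabilizer (Perm Ω) H = K) : IsRelationGroup K :=
  ⟨H, by ext g; simp [← hK, mem_stabilizer_set' H.toFinite]⟩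

theorem isRelationGroup_of_regular_of_notMem_orbit {G K : Subgroup (Perm Ω)} (hKG : K ≤ G)
    {x z u : Finset Ω} (hz : z ∉ orbit G x)
    (hmax : ∀ G' : Subgroup (Perm Ω), G < G' → ∃ g ∈ G', g • x = z)
    (hu : ∀ g ∈ G, g • u = u → g = 1) (hux : u.card ≠ x.card) : IsRelationGroup K := by
  refine isRelationGroup_of_stabilizer_eq (orbit K u ∪ orbit G x) (le_antisymm ?_ ?_)
  · intro g hg
    have hgu := stabilizer_le_stabilizer_inter_setOf_card_eq _ u.card hg
    have hgx := stabilizer_le_stabilizer_inter_setOf_card_eq _ x.card hg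
    rw [union_inter_setOf_card_eq (orbit_subset_setOf_card_eq K u)
      (orbit_subset_setOf_card_eq G x) hux] at hgu
    rw [Set.union_comm, union_inter_setOf_card_eq (orbit_subset_setOf_card_eq G x)
      (orbit_subset_setOf_card_eq K u) hux.symm] at hgx
    exact inf_stabilizer_orbit_le_of_regular hKG hu
      ⟨stabilizer_orbit_le_of_maximal hz hmax hgx, hgu⟩
  · exact (le_inf (K.le_stabilizer_orbit u) (hKG.trans (G.le_stabilizer_orbit x))).trans
      stabilizer_inf_stabilizer_le_stabilizer_union

lemma card_lt_choose_of_regular (G : Subgroup (Perm Ω)) {x y z : Finset Ω}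
    (hy : ∀ g ∈ G, g • y = y → g = 1) (hx : x.card = y.card) (hz : z.card = y.card)
    (hxz : z ∉ orbit G x) : Nat.card G < (Fintype.card Ω).choose y.card := by
  have hstab : stabilizer G y = ⊥ :=
    (Subgroup.eq_bot_iff_forall _).2 fun g hg => Subtype.ext (hy g g.2 hg)
  have hssub : orbit G y ⊂ {s | s.card = y.card} := by
    refine (orbit_subset_setOf_card_eq G y).ssubset_of_ne fun h => hxz ?_
    have hxy : x ∈ orbit G y := h ▸ hx
    have hzy : z ∈ orbit G y := h ▸ hz
    rw [← orbit_eq_iff] at hxy hzy ⊢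
    rw [hxy, hzy]
  calc Nat.card G = (orbit G y).ncard := by
        rw [← card_orbit_mul_card_stabilizer y, hstab, Subgroup.card_bot, mul_one]
    _ < {s : Finset Ω | s.card = y.card}.ncard := Set.ncard_lt_ncard hssub (Set.toFinite _)
    _ = (Fintype.card Ω).choose y.card := ncard_setOf_card_eq _

lemma two_mul_choose_le_card_of_not_regular (G : Subgroup (Perm Ω)) {u : Finset Ω}
    (horbit : ∀ s : Finset Ω, s.card = u.card → s ∈ orbit G u)
    (hu : ¬ ∀ g ∈ G, g • u = u → g = 1) : 2 * (Fintype.card Ω).choose u.card ≤ Nat.card G := by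
  have horbit_eq : orbit G u = {s | s.card = u.card} :=
    (orbit_subset_setOf_card_eq G u).antisymm horbit
  have hstab : 1 < Nat.card (stabilizer G u) := by
    classical
    refine (Subgroup.one_lt_card_iff_ne_bot _).2 fun h => hu fun g hg hgu => ?_
    simpa using (Subgroup.eq_bot_iff_forall _).1 h ⟨g, hg⟩ hgu
  calc 2 * (Fintype.card Ω).choose u.card = (orbit G u).ncard * 2 := by
        rw [horbit_eq, ncard_setOf_card_eq, mul_comm]
    _ ≤ (orbit G u).ncard * Nat.card (stabilizer G u) := Nat.mul_le_mul_left _ hstab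
    _ = Nat.card G := card_orbit_mul_card_stabilizer u

lemma regular_of_card_eq_pred (G : Subgroup (Perm Ω)) {x y z u : Finset Ω}
    (hy : ∀ g ∈ G, g • y = y → g = 1) (hx : x.card = y.card) (hz : z.card = y.card)
    (hxz : z ∉ orbit G x) (hn : Fintype.card Ω = 2 * y.card) (hu : u.card = y.card - 1)
    (horbit : ∀ s : Finset Ω, s.card = u.card → s ∈ orbit G u) :
    ∀ g ∈ G, g • u = u → g = 1 := by
  by_contra hreg
  have hlt := card_lt_choose_of_regular G hy hx hz hxz
  have hle := two_mul_choose_le_card_of_not_regular G horbit hreg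
  have hchoose := Nat.choose_two_mul_self_le_two_mul_choose_pred y.card
  rw [hn] at hlt
  rw [hn, hu] at hle
  omega

theorem exists_regular_card_ne_of_not_setTransitive (G : Subgroup (Perm Ω)) {y : Finset Ω}
    (hy : ∀ g ∈ G, g • y = y → g = 1)
    (hnst : ¬ ∀ x z : Finset Ω, x.card = z.card → z ∈ orbit G x) :
    ∃ x z u : Finset Ω, x.card = z.card ∧ z ∉ orbit G x ∧
      (∀ g ∈ G, g • u = u → g = 1) ∧ u.card ≠ x.card := by
  by_cases hy_card : ∃ x z : Finset Ω, x.card = z.card ∧ z ∉ orbit G x ∧ y.card ≠ x.card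
  · obtain ⟨x, z, hxz, hz, hyx⟩ := hy_card
    exact ⟨x, z, y, hxz, hz, hy, hyx⟩
  push Not at hnst hy_card
  obtain ⟨x, z, hxz, hz⟩ := hnst
  have hx : x.card = y.card := (hy_card x z hxz hz).symm
  have hy0 : y.card ≠ 0 := by
    intro h0
    have hx0 : x = ∅ := Finset.card_eq_zero.1 (hx.trans h0)
    have hz0 : z = ∅ := Finset.card_eq_zero.1 (hxz ▸ hx.trans h0)
    exact hz (hx0 ▸ hz0 ▸ mem_orbit_self _)
  have hn : Fintype.card Ω = 2 * y.card := by
    have hc := hy_card xᶜ zᶜ (by simp [Finset.card_compl, hxz]) (compl_notMem_orbit hz)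
    rw [Finset.card_compl] at hc
    have := x.card_le_univ
    omega
  obtain ⟨u, -, hu⟩ := Finset.exists_subset_card_eq (s := (Finset.univ : Finset Ω))
    (n := y.card - 1) (by rw [Finset.card_univ]; omega)
  have horbit : ∀ s : Finset Ω, s.card = u.card → s ∈ orbit G u := fun s hs => by
    by_contra hsu
    have := hy_card u s hs.symm hsu
    omega
  exact ⟨x, z, u, hxz, hz, regular_of_card_eq_pred G hy hx (hxz ▸ hx) hz hn hu horbit,
    by omega⟩

end Permutation

/-- Siemons–Volta Lemma 3.1(ii): if `G` has a regular set, is not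
set-transitive, and is maximal in `Sym(Ω)` with that property, then every subgroup of
`G` is a relation group. -/
theorem stmt17 {Ω : Type*} [Fintype Ω] [DecidableEq Ω]
    (G : Subgroup (Equiv.Perm Ω)) (y : Finset Ω)
    (hreg : ∀ g ∈ G, g • y = y → g = 1)
    (hnst : ¬ ∀ x z : Finset Ω, x.card = z.card → ∃ g ∈ G, g • x = z)
    (hmax : ∀ G' : Subgroup (Equiv.Perm Ω), G < G' →
      ∀ x z : Finset Ω, x.card = z.card → ∃ g ∈ G', g • x = z) :
    ∀ K : Subgroup (Equiv.Perm Ω), K ≤ G →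
      ∃ H : Set (Finset Ω),
        (K : Set (Equiv.Perm Ω)) = {g : Equiv.Perm Ω | ∀ x ∈ H, g • x ∈ H} := by
  intro K hKG
  obtain ⟨x, z, u, hxz, hz, hu, hux⟩ := exists_regular_card_ne_of_not_setTransitive G hreg
    (by simpa only [mem_orbit_subgroup_iff] using hnst)
  exact isRelationGroup_of_regular_of_notMem_orbit hKG hz (fun G' hG' => hmax G' hG' x z hxz)
    hu hux
end
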